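/- arXiv:2311.03376 — 6 statements merged into one kernel-verified Lean document; each statement's English description precedes it below -/
import Mathlib

section
/- Let P, Q be vectors in R^N and let π, σ be permutations of [N] sorting P and Q respectively in descending order (P_{π(i)} ≥ P_{π(j)} and Q_{σ(i)} ≥ Q_{σ(j)} for i < j). If |P_k − Q_k| ≤ ρ for every k ∈ [N], then for every index i ∈ [N] we have P_{σ(i)} ≥ P_{π(i)} − 2ρ. -/
/-! Among the `i + 1` items that `P` ranks in its top `i + 1`, pigeonhole gives one, `a`, that
`Q` ranks `i`-th or lower. Then `P (π i) ≤ P a ≤ Q a + ρ ≤ Q (σ i) + ρ ≤ P (σ i) + 2ρ`. -/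

theorem Equiv.exists_le_le_symm_apply {α : Type*} {n : ℕ} (π σ : Fin n ≃ α) (i : Fin n) :
    ∃ j ≤ i, i ≤ σ.symm (π j) := by
  by_contra! h
  have hcard : (Finset.Iic i).card ≤ (Finset.Iio i).card :=
    Finset.card_le_card_of_injOn (fun j => σ.symm (π j))
      (fun j hj => Finset.mem_Iio.mpr (h j (Finset.mem_Iic.mp hj)))
      (σ.symm.injective.comp π.injective).injOn
  simp only [Fin.card_Iic, Fin.card_Iio] at hcard
  omega

/-- If `Q` is an entry-wise `ρ`-accurate estimate of `P`, and `π`, `σ` sort `P`, `Q`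
respectively in descending order, then the item ranked `i`-th by the estimate has true
reward at least that of the true `i`-th best item minus `2ρ`. -/
theorem stmt0 (N : ℕ) (P Q : Fin N → ℝ) (π σ : Equiv.Perm (Fin N)) (ρ : ℝ)
    (hπ : ∀ i j : Fin N, i < j → P (π j) ≤ P (π i))
    (hσ : ∀ i j : Fin N, i < j → Q (σ j) ≤ Q (σ i))
    (hρ : ∀ k : Fin N, |P k - Q k| ≤ ρ) :
    ∀ i : Fin N, P (π i) - 2 * ρ ≤ P (σ i) := by
  intro i
  have hPπ : Antitone (P ∘ π) := antitone_iff_forall_lt.mpr hπ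
  have hQσ : Antitone (Q ∘ σ) := antitone_iff_forall_lt.mpr hσ
  obtain ⟨j, hji, hij⟩ := Equiv.exists_le_le_symm_apply π σ i
  have hP := abs_le.mp (hρ (π j))
  have hQ := abs_le.mp (hρ (σ i))
  suffices P (π i) ≤ P (σ i) + 2 * ρ by linarith
  calc P (π i) ≤ P (π j) := hPπ hji
    _ ≤ Q (π j) + ρ := by linarith
    _ ≤ Q (σ i) + ρ := by
      have := hQσ hij
      simp only [Function.comp_apply, Equiv.apply_symm_apply] at this
      linarith
    _ ≤ P (σ i) + 2 * ρ := by linarith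
end

section
/- Let P, Q be vectors in R^N with |P_k − Q_k| ≤ Δ for all k, and let π, σ be permutations sorting P, Q respectively in descending order. Then for every s ∈ [N], |( P_{π(1)} − P_{π(s)} ) − ( Q_{σ(1)} − Q_{σ(s)} )| ≤ 6Δ. -/
/-! Sorting is monotone: if `P ≤ Q` entrywise, then the `s`-th largest entry of `P` is at most
the `s`-th largest entry of `Q`, since otherwise the `s + 1` largest entries of `P` would all sit
above `Q (σ s)` and hence, read in `Q`, be among the `s` largest entries of `Q`. Applied to
`P - Δ ≤ Q` and `Q - Δ ≤ P`, the sorted sequences are entrywise `Δ`-close, so the two gaps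
differ by at most `2Δ ≤ 6Δ`. -/

theorem sorted_le_sorted_of_le {α : Type*} [LinearOrder α] {N : ℕ} {P Q : Fin N → α}
    {π σ : Equiv.Perm (Fin N)} (hPQ : ∀ k, P k ≤ Q k)
    (hπ : Antitone (P ∘ π)) (hσ : Antitone (Q ∘ σ)) (s : Fin N) :
    P (π s) ≤ Q (σ s) := by
  by_contra! hlt
  have hmaps : Set.MapsTo (σ.symm ∘ π) (Finset.Iic s) (Finset.Iio s) := by
    intro i hi
    simp only [Finset.coe_Iic, Finset.coe_Iio, Set.mem_Iic, Set.mem_Iio] at hi ⊢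
    by_contra! hle
    have hQ : Q (π i) ≤ Q (σ s) := by simpa using hσ hle
    exact (hlt.trans_le ((hπ hi).trans (hPQ (π i)))).not_ge hQ
  have hcard := Finset.card_le_card_of_injOn _ hmaps (σ.symm.injective.comp π.injective).injOn
  simp only [Fin.card_Iic, Fin.card_Iio] at hcard
  omega

theorem abs_sub_sorted_le {N : ℕ} {P Q : Fin N → ℝ} {π σ : Equiv.Perm (Fin N)} {Δ : ℝ}
    (hΔ : ∀ k, |P k - Q k| ≤ Δ) (hπ : Antitone (P ∘ π)) (hσ : Antitone (Q ∘ σ)) (s : Fin N) :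
    |P (π s) - Q (σ s)| ≤ Δ := by
  have hP : P (π s) - Δ ≤ Q (σ s) :=
    sorted_le_sorted_of_le (P := fun k ↦ P k - Δ) (fun k ↦ by linarith [(abs_le.mp (hΔ k)).2])
      (fun _ _ h ↦ sub_le_sub_right (hπ h) Δ) hσ s
  have hQ : Q (σ s) - Δ ≤ P (π s) :=
    sorted_le_sorted_of_le (P := fun k ↦ Q k - Δ) (fun k ↦ by linarith [(abs_le.mp (hΔ k)).1])
      (fun _ _ h ↦ sub_le_sub_right (hσ h) Δ) hπ s
  exact abs_sub_le_iff.mpr ⟨by linarith, by linarith⟩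

/-- If `Q` is entry-wise `Δ`-close to `P` and `π`, `σ` sort `P`, `Q` in descending order,
then the gap between the top item and the `s`-th item is preserved up to `6Δ`. -/
theorem stmt1 (N : ℕ) (hN : 0 < N) (P Q : Fin N → ℝ) (π σ : Equiv.Perm (Fin N)) (Δ : ℝ)
    (hΔ : ∀ k : Fin N, |P k - Q k| ≤ Δ)
    (hπ : ∀ i j : Fin N, i < j → P (π j) ≤ P (π i))
    (hσ : ∀ i j : Fin N, i < j → Q (σ j) ≤ Q (σ i)) :
    ∀ s : Fin N,
      |(P (π ⟨0, hN⟩) - P (π s)) - (Q (σ ⟨0, hN⟩) - Q (σ s))| ≤ 6 * Δ := by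
  intro s
  have hπ' : Antitone (P ∘ π) := antitone_iff_forall_lt.mpr hπ
  have hσ' : Antitone (Q ∘ σ) := antitone_iff_forall_lt.mpr hσ
  have htop := abs_sub_sorted_le hΔ hπ' hσ' ⟨0, hN⟩
  have hs := abs_sub_sorted_le hΔ hπ' hσ' s
  have hΔ_nonneg : 0 ≤ Δ := (abs_nonneg _).trans htop
  calc |(P (π ⟨0, hN⟩) - P (π s)) - (Q (σ ⟨0, hN⟩) - Q (σ s))|
      = |(P (π ⟨0, hN⟩) - Q (σ ⟨0, hN⟩)) - (P (π s) - Q (σ s))| := by ring_nf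
    _ ≤ |P (π ⟨0, hN⟩) - Q (σ ⟨0, hN⟩)| + |P (π s) - Q (σ s)| := abs_sub _ _
    _ ≤ 6 * Δ := by linarith
end

section
/- Let u, v be users with reward vectors P_u, P_v and estimates Q_u, Q_v satisfying |P_{w,x} − Q_{w,x}| ≤ Δ for w ∈ {u,v} and all x, and suppose there is a chain of users u = a_0, a_1, ..., a_L = v such that consecutive users a_i, a_{i+1} satisfy |Q_{a_i,x} − Q_{a_{i+1},x}| ≤ 2Δ for all items x (with all intermediate users also having Δ-accurate estimates). Define R_u, R_v as the sets of items within 2Δ of each user's estimated maximum. Then for all x ∈ R_u, y ∈ R_v: |P_{u,x} − P_{u,y}| ≤ 8(L+1)Δ and |P_{v,x} − P_{v,y}| ≤ 8(L+1)Δ. -/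
/-!
Along the chain the estimates of `u` and `v` drift apart by at most `2Δ` per step, so
`Q_u` and `Q_v` are entry-wise `2LΔ`-close. An item that nearly maximizes `Q_v` therefore
nearly maximizes `Q_u` as well, up to the drift, so the `Q_u`-values of near-maximizers of
`Q_u` and of `Q_v` differ by at most `2Δ + 4LΔ`; the `Δ`-accuracy of `Q_u` costs another
`2Δ` when passing to `P_u`. The bound `4(L+1)Δ` obtained this way is half the claimed one.
-/

theorem dist_le_mul_of_dist_succ_le {α : Type*} [PseudoMetricSpace α] {f : ℕ → α} {ε : ℝ}
    {n : ℕ} (h : ∀ i < n, dist (f i) (f (i + 1)) ≤ ε) : dist (f 0) (f n) ≤ n * ε := by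
  simpa using dist_le_range_sum_of_dist_le (d := fun _ => ε) n fun {k} hk => h k hk

theorem abs_sub_le_of_near_max {α : Type*} {f g : α → ℝ} {D ε : ℝ}
    (hfg : ∀ k, |f k - g k| ≤ D) {x y : α} (hx : ∀ k, f k - ε ≤ f x)
    (hy : ∀ k, g k - ε ≤ g y) : |f x - f y| ≤ ε + 2 * D := by
  have hD : 0 ≤ D := (abs_nonneg _).trans (hfg x)
  have hfx := abs_le.mp (hfg x)
  have hfy := abs_le.mp (hfg y)
  rw [abs_le]
  constructor <;> linarith [hx y, hy x]

theorem abs_sub_le_of_abs_sub_le {α : Type*} {p q : α → ℝ} {Δ : ℝ}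
    (hpq : ∀ k, |p k - q k| ≤ Δ) (x y : α) : |p x - p y| ≤ |q x - q y| + 2 * Δ :=
  calc |p x - p y| = |(p x - q x) + (q x - q y) - (p y - q y)| := by ring_nf
    _ ≤ |p x - q x| + |q x - q y| + |p y - q y| :=
      (abs_sub _ _).trans (by gcongr; exact abs_add_le _ _)
    _ ≤ |q x - q y| + 2 * Δ := by linarith [hpq x, hpq y]

/-- Users `u = a 0` and `v = a L` connected by a chain of users whose estimates are
pairwise entry-wise `2Δ`-close, each user having a `Δ`-accurate estimate of its true
reward vector: items within `2Δ` of the respective estimated maxima of `u` and `v` have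
true rewards within `8(L+1)Δ` for both `u` and `v`. -/
theorem stmt5 (N : ℕ) (ι : Type*) (P Q : ι → Fin N → ℝ) (Δ : ℝ) (L : ℕ) (a : ℕ → ι)
    (hacc : ∀ i ≤ L, ∀ x : Fin N, |P (a i) x - Q (a i) x| ≤ Δ)
    (hchain : ∀ i < L, ∀ x : Fin N, |Q (a i) x - Q (a (i + 1)) x| ≤ 2 * Δ) :
    ∀ x y : Fin N,
      (∀ k : Fin N, Q (a 0) k - 2 * Δ ≤ Q (a 0) x) →
      (∀ k : Fin N, Q (a L) k - 2 * Δ ≤ Q (a L) y) →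
      |P (a 0) x - P (a 0) y| ≤ 8 * (L + 1) * Δ ∧
        |P (a L) x - P (a L) y| ≤ 8 * (L + 1) * Δ := by
  intro x y hx hy
  have hΔ : 0 ≤ Δ := (abs_nonneg _).trans (hacc 0 L.zero_le x)
  have hdrift : ∀ k, |Q (a 0) k - Q (a L) k| ≤ L * (2 * Δ) := fun k =>
    dist_le_mul_of_dist_succ_le (f := fun i => Q (a i) k) fun i hi => hchain i hi k
  have hu := abs_sub_le_of_near_max hdrift hx hy
  have hv :=
    abs_sub_le_of_near_max (fun k => abs_sub_comm (Q (a 0) k) _ ▸ hdrift k) hy hx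
  rw [abs_sub_comm] at hv
  have hPu := abs_sub_le_of_abs_sub_le (hacc 0 L.zero_le) x y
  have hPv := abs_sub_le_of_abs_sub_le (hacc L le_rfl) x y
  have hL : (0 : ℝ) ≤ L * Δ := by positivity
  constructor <;> linarith
end

section
/- In a graph on M vertices where the vertices are partitioned into C groups and every group forms a clique, any two vertices lying in the same connected component are joined by a path of length at most 2C − 1. -/
/-!
A shortest walk `p` from `u` to `v` visits its vertices at pairwise distances equal to their
index gaps. Two vertices of one group are at distance at most one, so each group is met only
at one or two consecutive positions of `p`. Hence `p` has at most `2C` vertices.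
-/

open Finset

theorem Finset.card_le_two_of_forall_le_add_one {s : Finset ℕ}
    (h : ∀ i ∈ s, ∀ k ∈ s, k ≤ i + 1) : #s ≤ 2 := by
  rcases s.eq_empty_or_nonempty with rfl | hs
  · simp
  have hsub : s ⊆ Icc (s.min' hs) (s.min' hs + 1) := fun k hk =>
    mem_Icc.mpr ⟨s.min'_le k hk, h _ (s.min'_mem hs) k hk⟩
  have := card_le_card hsub
  rw [Nat.card_Icc] at this
  omega

theorem le_two_mul_card_of_eq_imp_le_add_one {β : Type*} [Fintype β] (n : ℕ) (f : ℕ → β)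
    (hf : ∀ i < n, ∀ k < n, f i = f k → k ≤ i + 1) : n ≤ 2 * Fintype.card β := by
  classical
  have hfiber : ∀ b ∈ (range n).image f, #{a ∈ range n | f a = b} ≤ 2 := fun b _ =>
    card_le_two_of_forall_le_add_one fun i hi k hk => by
      simp only [mem_filter, mem_range] at hi hk
      exact hf i hi.1 k hk.1 (hi.2.trans hk.2.symm)
  calc n = #(range n) := (card_range n).symm
    _ ≤ 2 * #((range n).image f) := card_le_mul_card_image _ 2 hfiber
    _ ≤ 2 * Fintype.card β := Nat.mul_le_mul_left 2 (card_le_univ _)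

namespace SimpleGraph.Walk

variable {V : Type*} {G : SimpleGraph V} {u v : V}

theorem dist_le_add_dist_getVert (p : G.Walk u v) (i k : ℕ) :
    G.dist u v ≤ i + G.dist (p.getVert i) (p.getVert k) + (p.length - k) := by
  have hreach : G.Reachable (p.getVert i) (p.getVert k) :=
    (p.take i).reachable.symm.trans (p.take k).reachable
  obtain ⟨q, hq⟩ := hreach.exists_walk_length_eq_dist
  have := G.dist_le ((p.take i).append (q.append (p.drop k)))
  simp only [length_append, take_length, drop_length] at this
  omega

theorem sub_le_dist_getVert_of_length_eq_dist (p : G.Walk u v) (hp : p.length = G.dist u v)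
    {i k : ℕ} (hk : k ≤ p.length) : k - i ≤ G.dist (p.getVert i) (p.getVert k) := by
  have := p.dist_le_add_dist_getVert i k
  omega

end SimpleGraph.Walk

theorem stmt7_general {V : Type*}
    (G : SimpleGraph V) (C : ℕ) (group : V → Fin C)
    (hclique : ∀ u v : V, u ≠ v → group u = group v → G.Adj u v) :
    ∀ u v : V, G.Reachable u v → ∃ p : G.Walk u v, p.length ≤ 2 * C - 1 := by
  intro u v huv
  obtain ⟨p, hp⟩ := huv.exists_walk_length_eq_dist
  refine ⟨p, ?_⟩
  have hdist : ∀ x y, group x = group y → G.dist x y ≤ 1 := fun x y hxy => by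
    by_cases hne : x = y
    · simp [hne]
    · exact (SimpleGraph.dist_eq_one_iff_adj.mpr (hclique x y hne hxy)).le
  have hcount : p.length + 1 ≤ 2 * Fintype.card (Fin C) :=
    le_two_mul_card_of_eq_imp_le_add_one _ (fun i => group (p.getVert i))
      fun i _ k hk hik => by
        have := p.sub_le_dist_getVert_of_length_eq_dist hp (i := i) (k := k) (by omega)
        have := hdist _ _ hik
        omega
  rw [Fintype.card_fin] at hcount
  omega

/-- In a graph on `M` vertices partitioned into `C` groups, each group forming a clique,
any two vertices in the same connected component are joined by a walk of length at most
`2C - 1`. -/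
theorem stmt7 {V : Type*} [Fintype V] (M : ℕ) (hM : Fintype.card V = M)
    (G : SimpleGraph V) (C : ℕ) (group : V → Fin C)
    (hclique : ∀ u v : V, u ≠ v → group u = group v → G.Adj u v) :
    ∀ u v : V, G.Reachable u v → ∃ p : G.Walk u v, p.length ≤ 2 * C - 1 :=
  stmt7_general G C group hclique
end

section
/- Let N ≥ T ≥ 1 and 1 ≤ T/(4B) < T. The number of subsets S' of [N] of size T that intersect a fixed subset S of size T in more than T/(4B) elements is at most T · (2Ne/T)^{T − T/(4B)} · (4e)^{T/(4B)}. -/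
/-!
Splitting `S'` as `(S' ∩ S, S' \ S)` injects the family into pairs of a subset of `S` and a subset
of `[N]` of size at most `m = T - k`, so it has at most `2^T` times as many members as there are
subsets of size `≤ m`. Weighting a subset `U` by `x^#U` with `x = m/N` bounds the latter count by
`(1 + x)^N / x^m ≤ (Ne/m)^m`, and `(T/m)^m = (1 + k/m)^m ≤ e^k` turns this into the stated bound.
-/

open Finset Real

theorem div_pow_le_div_add_pow_mul_exp {c : ℝ} (hc : 0 ≤ c) {m : ℕ} (hm : 0 < m) (k : ℕ) :
    (c / m) ^ m ≤ (c / (m + k)) ^ m * exp k := by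
  have hm' : (0 : ℝ) < m := by exact_mod_cast hm
  have h : (1 + k / m : ℝ) ^ m ≤ exp k := by
    simpa [sub_eq_add_neg, neg_div] using
      one_sub_div_pow_le_exp_neg (n := m) (t := -k) (by linarith [k.cast_nonneg (α := ℝ)])
  calc (c / m) ^ m = (c / (m + k)) ^ m * (1 + k / m) ^ m := by
        rw [← mul_pow]; congr 1; field_simp
    _ ≤ (c / (m + k)) ^ m * exp k := by gcongr

theorem card_filter_card_le_le_pow {α : Type*} [Fintype α] {m : ℕ} (hm : m ≤ Fintype.card α) :
    (#{U : Finset α | #U ≤ m} : ℝ) ≤ (Fintype.card α * exp 1 / m) ^ m := by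
  set n := Fintype.card α
  rcases Nat.eq_zero_or_pos m with rfl | hm0
  · simpa using card_le_one.2 fun _ _ _ _ => by simp_all
  have hm' : (0 : ℝ) < m := by exact_mod_cast hm0
  have hn' : (0 : ℝ) < n := by exact_mod_cast hm0.trans_le hm
  set x : ℝ := m / n
  have hx0 : 0 < x := by positivity
  have hx1 : x ≤ 1 := div_le_one_of_le₀ (by exact_mod_cast hm) hn'.le
  have hweighted : (#{U : Finset α | #U ≤ m} : ℝ) * x ^ m ≤ exp m := calc
    (#{U : Finset α | #U ≤ m} : ℝ) * x ^ m = ∑ U : Finset α with #U ≤ m, x ^ m := by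
        rw [sum_const, nsmul_eq_mul]
    _ ≤ ∑ U : Finset α with #U ≤ m, x ^ #U :=
        sum_le_sum fun U hU => pow_le_pow_of_le_one hx0.le hx1 (mem_filter.1 hU).2
    _ ≤ ∑ U : Finset α, x ^ #U :=
        sum_le_sum_of_subset_of_nonneg (filter_subset _ _) fun _ _ _ => by positivity
    _ = (x + 1) ^ n := by simpa using Fintype.sum_pow_mul_eq_add_pow α x 1
    _ ≤ exp x ^ n := by gcongr; linarith [add_one_le_exp x]
    _ = exp m := by rw [← exp_nat_mul]; congr 1; simp only [x]; field_simp
  calc (#{U : Finset α | #U ≤ m} : ℝ) ≤ exp m / x ^ m := (le_div_iff₀ (by positivity)).2 hweighted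
    _ = (n * exp 1 / m) ^ m := by
        rw [← exp_one_pow, ← div_pow]; congr 1; simp only [x]; field_simp

theorem card_filter_card_sdiff_le {α : Type*} [Fintype α] [DecidableEq α] (S : Finset α) (m : ℕ) :
    #{S' : Finset α | #(S' \ S) ≤ m} ≤ 2 ^ #S * #{U : Finset α | #U ≤ m} := by
  rw [← card_powerset, ← card_product]
  refine card_le_card_of_injOn (fun S' => (S' ∩ S, S' \ S)) (fun S' hS' => ?_)
    fun A _ B _ hAB => ?_
  · simp_all
  · rw [← sdiff_union_inter A S, ← sdiff_union_inter B S]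
    simp_all

theorem stmt9_general (N T k : ℕ) (hTN : T ≤ N) (hkT : k < T)
    (S : Finset (Fin N)) (hS : S.card = T) :
    ((Finset.univ.filter fun S' : Finset (Fin N) =>
        S'.card = T ∧ k < (S' ∩ S).card).card : ℝ) ≤
      (T : ℝ) * (2 * N * Real.exp 1 / T) ^ (T - k) * (4 * Real.exp 1) ^ k := by
  set m := T - k
  have hm : 0 < m := by omega
  have hsub : ∀ S' ∈ (univ : Finset (Finset (Fin N))), #S' = T ∧ k < #(S' ∩ S) →
      #(S' \ S) ≤ m := by
    rintro S' - ⟨hcard, hinter⟩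
    have := card_inter_add_card_sdiff S' S
    omega
  have hT : (T : ℝ) = m + k := by norm_cast; omega
  calc _ ≤ (2 ^ T * #{U : Finset (Fin N) | #U ≤ m} : ℝ) := by
        exact_mod_cast (card_le_card (monotone_filter_right _ hsub)).trans
          (hS ▸ card_filter_card_sdiff_le S m)
    _ ≤ 2 ^ T * (N * exp 1 / m) ^ m := by
        gcongr; simpa using card_filter_card_le_le_pow (α := Fin N) (m := m) (by simp; omega)
    _ ≤ 2 ^ T * ((N * exp 1 / T) ^ m * exp k) := by
        gcongr; rw [hT]; exact div_pow_le_div_add_pow_mul_exp (by positivity) hm k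
    _ = (2 * N * exp 1 / T) ^ m * (2 * exp 1) ^ k := by
        rw [show T = m + k by omega, mul_pow, ← exp_one_pow]; push_cast; ring
    _ ≤ T * (2 * N * exp 1 / T) ^ m * (4 * exp 1) ^ k := by
        rw [mul_assoc]
        gcongr
        · exact le_mul_of_one_le_left (by positivity) (by exact_mod_cast Nat.one_le_of_lt hkT)
        · norm_num

/-- The number of `T`-subsets `S'` of `[N]` intersecting a fixed `T`-subset `S` in more
than `k = T/(4B)` elements is at most `T · (2Ne/T)^(T−k) · (4e)^k`. -/
theorem stmt9 (N T B k : ℕ) (hTN : T ≤ N) (hk : 4 * B * k = T)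
    (hk1 : 1 ≤ k) (hkT : k < T)
    (S : Finset (Fin N)) (hS : S.card = T) :
    ((Finset.univ.filter fun S' : Finset (Fin N) =>
        S'.card = T ∧ k < (S' ∩ S).card).card : ℝ) ≤
      (T : ℝ) * (2 * N * Real.exp 1 / T) ^ (T - k) * (4 * Real.exp 1) ^ k :=
  stmt9_general N T k hTN hkT S hS
end

section
/- Fano's inequality with approximate recovery: let V be uniform on a finite set 𝒱, let V → X → V̂ be a Markov chain with V̂ taking values in 𝒱̂, and let d : 𝒱 × 𝒱̂ → R and t > 0 define an error event {d(V, V̂) ≥ t}. Then P(error) ≥ 1 − (I(V; V̂) + log 2) / log(|𝒱| / G_max), where G_max = max_{v̂ ∈ 𝒱̂} |{ v ∈ 𝒱 : d(v, v̂) < t }|. -/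
/-!
Mutual information is the relative entropy of the joint law `p` of `(V, V̂)` with respect to the
law `q` of a uniform `V` drawn independently of `V̂`. Under `q` the event `{d(V, V̂) < t}` has mass
at most `G_max / |𝒱|`, because every value of `V̂` leaves at most `G_max` admissible `v`. Merging
this event and its complement (log-sum inequality) bounds the divergence below by a binary one,
which is at least `P(d(V, V̂) < t) · log (|𝒱| / G_max) - log 2`.
-/

/-- Mutual information of a joint probability mass function `p` on `V × W`. -/
noncomputable def mutualInfoPMF {V W : Type*} [Fintype V] [Fintype W]
    (p : V → W → ℝ) : ℝ :=
  ∑ v, ∑ w, p v w * Real.log (p v w / ((∑ w', p v w') * (∑ v', p v' w)))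

open Finset Real

namespace Real

theorem sum_mul_log_div_sum_le {ι : Type*} (s : Finset ι) {p q : ι → ℝ}
    (hp : ∀ i ∈ s, 0 ≤ p i) (hq : ∀ i ∈ s, 0 ≤ q i) (hpq : ∀ i ∈ s, q i = 0 → p i = 0) :
    (∑ i ∈ s, p i) * log ((∑ i ∈ s, p i) / ∑ i ∈ s, q i) ≤ ∑ i ∈ s, p i * log (p i / q i) := by
  set P := ∑ i ∈ s, p i
  set Q := ∑ i ∈ s, q i
  rcases (sum_nonneg hq).eq_or_lt with hQ | hQ
  · have hp0 : ∀ i ∈ s, p i = 0 := fun i hi =>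
      hpq i hi ((sum_eq_zero_iff_of_nonneg hq).1 hQ.symm i hi)
    rw [show P = 0 from sum_eq_zero hp0, zero_mul]
    exact (sum_eq_zero fun i hi => by rw [hp0 i hi, zero_mul]).ge
  -- Jensen for `x ↦ x log x` at the points `p i / q i` with weights `q i / Q`
  have hJensen := convexOn_mul_log.map_sum_le (t := s) (w := fun i => q i / Q)
    (p := fun i => p i / q i) (fun i hi => div_nonneg (hq i hi) hQ.le)
    (by rw [← sum_div, div_self hQ.ne']) (fun i hi => div_nonneg (hp i hi) (hq i hi))
  have hmean : ∑ i ∈ s, q i / Q * (p i / q i) = P / Q := by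
    rw [sum_div]
    refine sum_congr rfl fun i hi => ?_
    rw [div_mul_eq_mul_div, mul_div_cancel_of_imp' (hpq i hi)]
  have hvalue : ∑ i ∈ s, q i / Q * (p i / q i * log (p i / q i)) =
      (∑ i ∈ s, p i * log (p i / q i)) / Q := by
    rw [sum_div]
    refine sum_congr rfl fun i hi => ?_
    rw [← mul_assoc, div_mul_eq_mul_div, mul_div_cancel_of_imp' (hpq i hi), div_mul_eq_mul_div]
  simp only [smul_eq_mul, hmean, hvalue] at hJensen
  rwa [div_mul_eq_mul_div, div_le_div_iff_of_pos_right hQ] at hJensen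

theorem sum_mul_log_div_le_of_sum_le {ι : Type*} (s : Finset ι) {p q : ι → ℝ} {c : ℝ}
    (hp : ∀ i ∈ s, 0 ≤ p i) (hq : ∀ i ∈ s, 0 ≤ q i) (hpq : ∀ i ∈ s, q i = 0 → p i = 0)
    (hqc : ∑ i ∈ s, q i ≤ c) :
    (∑ i ∈ s, p i) * log ((∑ i ∈ s, p i) / c) ≤ ∑ i ∈ s, p i * log (p i / q i) := by
  refine le_trans ?_ (sum_mul_log_div_sum_le s hp hq hpq)
  rcases (sum_nonneg hp).eq_or_lt with hP | hP
  · simp [← hP]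
  have hQ : 0 < ∑ i ∈ s, q i := by
    refine (sum_nonneg hq).lt_of_ne fun hQ => hP.ne' (sum_eq_zero fun i hi => ?_)
    exact hpq i hi ((sum_eq_zero_iff_of_nonneg hq).1 hQ.symm i hi)
  gcongr
  exact div_pos hP (hQ.trans_le hqc)

theorem sum_mul_log_inv_le_sum_mul_log_div_add_log_two {ι : Type*} [Fintype ι]
    {p q : ι → ℝ} (hp : ∀ i, 0 ≤ p i) (hq : ∀ i, 0 ≤ q i) (hpq : ∀ i, q i = 0 → p i = 0)
    (hp1 : ∑ i, p i = 1) (hq1 : ∑ i, q i ≤ 1) (s : Finset ι) {c : ℝ} (hc : 0 < c)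
    (hsc : ∑ i ∈ s, q i ≤ c) :
    (∑ i ∈ s, p i) * log c⁻¹ ≤ ∑ i, p i * log (p i / q i) + log 2 := by
  classical
  set a := ∑ i ∈ s, p i
  have hcompl : ∑ i ∈ sᶜ, p i = 1 - a := by rw [← hp1, ← sum_add_sum_compl s p]; ring
  have hin := sum_mul_log_div_le_of_sum_le s (fun i _ => hp i) (fun i _ => hq i)
    (fun i _ => hpq i) hsc
  have hout := sum_mul_log_div_le_of_sum_le sᶜ (fun i _ => hp i) (fun i _ => hq i)
    (fun i _ => hpq i) ((sum_le_univ_sum_of_nonneg hq).trans hq1)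
  rw [hcompl, div_one] at hout
  have hsplit := sum_add_sum_compl s fun i => p i * log (p i / q i)
  have hlog : a * log (a / c) = a * log a + a * log c⁻¹ := by
    rcases eq_or_ne a 0 with ha | ha
    · simp [ha]
    · rw [div_eq_mul_inv, log_mul ha (inv_ne_zero hc.ne'), mul_add]
  have hentropy := binEntropy_le_log_two (p := a)
  simp only [binEntropy, log_inv] at hentropy
  linarith

end Real

section JointPMF

variable {V W : Type*} [Fintype V] (p : V → W → ℝ)

/-- The law of `(V, V̂)` if `V` were uniform and independent of `V̂`, `V̂` keeping its marginal. -/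
noncomputable def uniformProdMarginal (x : V × W) : ℝ :=
  (∑ v, p v x.2) / Fintype.card V

theorem mutualInfoPMF_eq_sum_mul_log_div_uniformProdMarginal [Fintype W]
    (huniform : ∀ v, ∑ w, p v w = 1 / Fintype.card V) :
    mutualInfoPMF p = ∑ x : V × W, p x.1 x.2 * log (p x.1 x.2 / uniformProdMarginal p x) := by
  rw [mutualInfoPMF, Fintype.sum_prod_type]
  simp only [huniform, one_div_mul_eq_div, uniformProdMarginal]

variable {p}

theorem uniformProdMarginal_nonneg (hp : ∀ v w, 0 ≤ p v w) (x : V × W) :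
    0 ≤ uniformProdMarginal p x :=
  div_nonneg (sum_nonneg fun v _ => hp v x.2) (Nat.cast_nonneg _)

theorem eq_zero_of_uniformProdMarginal_eq_zero (hp : ∀ v w, 0 ≤ p v w) {x : V × W}
    (hx : uniformProdMarginal p x = 0) : p x.1 x.2 = 0 := by
  have : Nonempty V := ⟨x.1⟩
  have hcard : (Fintype.card V : ℝ) ≠ 0 := Nat.cast_ne_zero.2 Fintype.card_ne_zero
  have hcol : ∑ v, p v x.2 = 0 := by simpa [uniformProdMarginal, hcard] using hx
  exact (sum_eq_zero_iff_of_nonneg fun v _ => hp v x.2).1 hcol x.1 (mem_univ _)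

theorem sum_uniformProdMarginal_filter_le [Fintype W] (hp : ∀ v w, 0 ≤ p v w) (R : V → W → Prop)
    [DecidableRel R] (G : ℕ) (hG : ∀ w, #{v | R v w} ≤ G) :
    ∑ x ∈ univ.filter (fun x : V × W => R x.1 x.2), uniformProdMarginal p x ≤
      G / Fintype.card V * ∑ v, ∑ w, p v w := by
  rw [sum_filter, Fintype.sum_prod_type_right, sum_comm (f := p), mul_sum]
  refine sum_le_sum fun w _ => ?_
  simp only [uniformProdMarginal]
  rw [← sum_filter, sum_const, nsmul_eq_mul, mul_div_assoc', div_mul_eq_mul_div]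
  gcongr
  · exact sum_nonneg fun v _ => hp v w
  · exact_mod_cast hG w

theorem sum_uniformProdMarginal [Fintype W] [Nonempty V] :
    ∑ x : V × W, uniformProdMarginal p x = ∑ v, ∑ w, p v w := by
  have hcard : (Fintype.card V : ℝ) ≠ 0 := Nat.cast_ne_zero.2 Fintype.card_ne_zero
  rw [Fintype.sum_prod_type_right, sum_comm (f := p)]
  simp [uniformProdMarginal, mul_div_cancel₀ _ hcard]

end JointPMF

theorem stmt11_general {V W : Type*} [Fintype V] [Fintype W] [Nonempty V]
    (p : V → W → ℝ) (d : V → W → ℝ) (t : ℝ)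
    (hpos : ∀ v w, 0 ≤ p v w) (hsum : ∑ v, ∑ w, p v w = 1)
    (huniform : ∀ v, ∑ w, p v w = 1 / Fintype.card V)
    (Gmax : ℕ)
    (hG : Gmax = Finset.univ.sup fun w : W =>
      (Finset.univ.filter fun v : V => d v w < t).card)
    (hG1 : 1 ≤ Gmax) (hGV : Gmax < Fintype.card V) :
    1 - (mutualInfoPMF p + Real.log 2) /
        Real.log ((Fintype.card V : ℝ) / Gmax) ≤
      ∑ v, ∑ w, if t ≤ d v w then p v w else 0 := by
  have hN : (0 : ℝ) < Fintype.card V := Nat.cast_pos.2 Fintype.card_pos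
  have hG0 : (0 : ℝ) < Gmax := Nat.cast_pos.2 hG1
  have hL : 0 < log (Fintype.card V / Gmax : ℝ) :=
    log_pos ((one_lt_div hG0).2 (by exact_mod_cast hGV))
  set s := univ.filter fun x : V × W => d x.1 x.2 < t
  have hmass : ∑ x ∈ s, uniformProdMarginal p x ≤ Gmax / Fintype.card V := by
    simpa [hsum] using sum_uniformProdMarginal_filter_le hpos (fun v w => d v w < t) Gmax
      fun w => hG ▸ le_sup (f := fun w => #{v | d v w < t}) (mem_univ w)
  have hcorrect := sum_mul_log_inv_le_sum_mul_log_div_add_log_two (p := fun x : V × W => p x.1 x.2)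
    (fun x => hpos x.1 x.2) (uniformProdMarginal_nonneg hpos)
    (fun x => eq_zero_of_uniformProdMarginal_eq_zero hpos)
    (by rw [Fintype.sum_prod_type]; exact hsum) (by rw [sum_uniformProdMarginal, hsum]) s
    (div_pos hG0 hN) hmass
  rw [← mutualInfoPMF_eq_sum_mul_log_div_uniformProdMarginal p huniform, inv_div] at hcorrect
  have herror : ∑ v, ∑ w, (if t ≤ d v w then p v w else 0) = 1 - ∑ x ∈ s, p x.1 x.2 := by
    rw [eq_sub_iff_add_eq, sum_filter, ← Fintype.sum_prod_type', ← sum_add_distrib, ← hsum,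
      ← Fintype.sum_prod_type']
    refine sum_congr rfl fun x _ => ?_
    split_ifs <;> linarith
  rw [herror, sub_le_sub_iff_left, le_div_iff₀ hL]
  exact hcorrect

/-- Fano's inequality with approximate recovery: for `V` uniform on a finite alphabet and
any estimator `V̂` with joint pmf `p`, the probability of the error event `{d(V,V̂) ≥ t}`
is at least `1 − (I(V;V̂) + log 2)/log(|𝒱|/G_max)` where
`G_max = max_{v̂} #{v : d(v,v̂) < t}`. -/
theorem stmt11 {V W : Type*} [Fintype V] [Fintype W] [Nonempty V]
    (p : V → W → ℝ) (d : V → W → ℝ) (t : ℝ) (ht : 0 < t)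
    (hpos : ∀ v w, 0 ≤ p v w) (hsum : ∑ v, ∑ w, p v w = 1)
    (huniform : ∀ v, ∑ w, p v w = 1 / Fintype.card V)
    (Gmax : ℕ)
    (hG : Gmax = Finset.univ.sup fun w : W =>
      (Finset.univ.filter fun v : V => d v w < t).card)
    (hG1 : 1 ≤ Gmax) (hGV : Gmax < Fintype.card V) :
    1 - (mutualInfoPMF p + Real.log 2) /
        Real.log ((Fintype.card V : ℝ) / Gmax) ≤
      ∑ v, ∑ w, if t ≤ d v w then p v w else 0 :=
  stmt11_general p d t hpos hsum huniform Gmax hG hG1 hGV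
end
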